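/- Let A be a vector space over a field K and α : A → A a linear map. The α-twisted circle product on C^•_α(A,A) is graded right pre-Lie: for f ∈ C^m_α(A,A), g ∈ C^n_α(A,A), h ∈ C^p_α(A,A), one has f ∘ (g ∘ h) − (f ∘ g) ∘ h = (−1)^{(n-1)(p-1)} ( f ∘ (h ∘ g) − (f ∘ h) ∘ g ). -/

import Mathlib

/-!
Expanding both iterated products as double sums over insertion positions, `f ∘ (g ∘ h)` is
exactly the part of `(f ∘ g) ∘ h` in which `h` is inserted inside `g`. Hence
`f ∘ (g ∘ h) - (f ∘ g) ∘ h` is minus the sum of the terms in which `g` and `h` are inserted into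
disjoint slots of `f`. Disjoint insertions commute, because `g` and `h` commute with `α` and only
read their own arguments; reordering them costs the sign `(-1)^{(n-1)(p-1)}`, so this sum is
graded-symmetric in `g` and `h`.
-/

/-- The cochain on `ℕ`-indexed tuples induced by a multilinear map `Aᵐ → A`
(an element of the Hochschild-type cochain space). -/
def toCochain {K A : Type*} [Field K] [AddCommGroup A] [Module K A] (m : ℕ)
    (f : MultilinearMap K (fun _ : Fin m => A) A) : (ℕ → A) → A :=
  fun a => f fun j => a j

/-- The `α`-twisted partial composition `f ∘ᵢ g`, where `n` is the arity of `g`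
and `i` is the (1-indexed) insertion position:
`(f ∘ᵢ g)(a₁,…) = f(α^[n-1] a₁, …, α^[n-1] a_{i-1}, g(a_i,…,a_{i+n-1}), α^[n-1] a_{i+n}, …)`. -/
def pcomp {A : Type*} (α : A → A) (n : ℕ) (f g : (ℕ → A) → A) (i : ℕ) : (ℕ → A) → A :=
  fun a => f fun j =>
    if j + 1 < i then α^[n - 1] (a j)
    else if j + 1 = i then g fun k => a (i - 1 + k)
    else α^[n - 1] (a (j + n - 1))

/-- The `α`-twisted circle product
`(f ∘ g)(a₁,…) = ∑_{i=1}^{m} (-1)^{(n-1)(i-1)} f(α^[n-1] a₁, …, g(a_i,…,a_{i+n-1}), …)`,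
where `m` is the arity of `f` and `n` the arity of `g`. -/
def circ {A : Type*} [AddCommGroup A] (α : A → A) (m n : ℕ) (f g : (ℕ → A) → A) :
    (ℕ → A) → A :=
  fun a => ∑ i ∈ Finset.range m, ((-1 : ℤ) ^ ((n - 1) * i)) • pcomp α n f g (i + 1) a

/-- The `α`-twisted cup product
`(f ∪ g)(a₁,…,a_{m+n}) = μ(f(α^[n-1] a₁,…,α^[n-1] a_m), g(α^[m-1] a_{m+1},…,α^[m-1] a_{m+n}))`. -/
def cup {A : Type*} (μ : A → A → A) (α : A → A) (m n : ℕ) (f g : (ℕ → A) → A) :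
    (ℕ → A) → A :=
  fun a => μ (f fun j => α^[n - 1] (a j)) (g fun j => α^[m - 1] (a (m + j)))

/-- The Hochschild-type coboundary of a hom-associative algebra `(A, μ, α)`:
`(δ f)(a₁,…,a_{n+1}) = μ(α^[n-1] a₁, f(a₂,…,a_{n+1}))
  + ∑_{i=1}^{n} (-1)^i f(α a₁,…, μ(a_i,a_{i+1}), …, α a_{n+1})
  + (-1)^{n+1} μ(f(a₁,…,a_n), α^[n-1] a_{n+1})`. -/
def hdelta {A : Type*} [AddCommGroup A] (μ : A → A → A) (α : A → A) (n : ℕ)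
    (f : (ℕ → A) → A) : (ℕ → A) → A :=
  fun a =>
    μ (α^[n - 1] (a 0)) (f fun j => a (j + 1))
      + ∑ i ∈ Finset.range n, ((-1 : ℤ) ^ (i + 1)) •
          f (fun j => if j < i then α (a j)
            else if j = i then μ (a i) (a (i + 1)) else α (a (j + 1)))
      + ((-1 : ℤ) ^ (n + 1)) • μ (f a) (α^[n - 1] (a n))

/-- The degree `-1` graded Lie bracket `[f,g] = f ∘ g - (-1)^{(m-1)(n-1)} g ∘ f`. -/
def brkt {A : Type*} [AddCommGroup A] (α : A → A) (m n : ℕ) (f g : (ℕ → A) → A) :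
    (ℕ → A) → A :=
  fun a => circ α m n f g a - ((-1 : ℤ) ^ ((m - 1) * (n - 1))) • circ α n m g f a

/-- The dot product `f · g = (-1)^{mn} f ∪ g`. -/
def dotp {A : Type*} [AddCommGroup A] (μ : A → A → A) (α : A → A) (m n : ℕ)
    (f g : (ℕ → A) → A) : (ℕ → A) → A :=
  fun a => ((-1 : ℤ) ^ (m * n)) • cup μ α m n f g a

open Finset

section PcompArgs

variable {A : Type*} (α : A → A)

def pcompArgs (n : ℕ) (G : (ℕ → A) → A) (i : ℕ) (a : ℕ → A) : ℕ → A :=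
  fun t => if t < i then α^[n] (a t) else if t = i then G (fun r => a (i + r))
    else α^[n] (a (t + n))

theorem pcomp_succ_succ (n : ℕ) (F G : (ℕ → A) → A) (i : ℕ) (a : ℕ → A) :
    pcomp α (n + 1) F G (i + 1) a = F (pcompArgs α n G i a) := by
  simp only [pcomp, Nat.add_lt_add_iff_right, Nat.add_right_cancel_iff, Nat.add_sub_cancel,
    Nat.add_succ_sub_one]
  rfl

theorem circ_succ_apply [AddCommGroup A] (m n : ℕ) (F G : (ℕ → A) → A) (a : ℕ → A) :
    circ α m (n + 1) F G a = ∑ i ∈ range m, ((-1 : ℤ) ^ (n * i)) • F (pcompArgs α n G i a) := by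
  simp only [circ, pcomp_succ_succ, Nat.add_sub_cancel]

theorem pcompArgs_pcompArgs_of_le {n p i j : ℕ} (hj : j ≤ n) (G H : (ℕ → A) → A)
    (a : ℕ → A) :
    pcompArgs α n G i (pcompArgs α p H (i + j) a)
      = pcompArgs α (n + p) (fun x => G (pcompArgs α p H j x)) i a := by
  funext t
  simp only [pcompArgs]
  rcases lt_trichotomy t i with ht | rfl | ht
  · simp [ht, show t < i + j by omega, Function.iterate_add_apply]
  · simp only [lt_irrefl, if_false, if_true]
    congr 1
    funext s
    simp only [Nat.add_lt_add_iff_left, Nat.add_left_cancel_iff, add_assoc]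
    rfl
  · simp [show ¬ t < i by omega, ht.ne', show ¬ t + n < i + j by omega,
      show t + n ≠ i + j by omega, Function.iterate_add_apply, add_assoc]

theorem iterate_map_of_map (G : (ℕ → A) → A) (hG : ∀ x, α (G x) = G fun t => α (x t))
    (e : ℕ) (x : ℕ → A) : α^[e] (G x) = G fun t => α^[e] (x t) := by
  induction e generalizing x with
  | zero => rfl
  | succ e ih => simp only [Function.iterate_succ_apply, hG, ih]

theorem pcompArgs_pcompArgs_of_lt {n p i k : ℕ} (hik : i < k) {G H : (ℕ → A) → A}
    (hG : ∀ x, α (G x) = G fun t => α (x t)) (hH : ∀ x, α (H x) = H fun t => α (x t))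
    (hG_local : ∀ x y : ℕ → A, (∀ s ≤ n, x s = y s) → G x = G y) (a : ℕ → A) :
    pcompArgs α n G i (pcompArgs α p H (k + n) a) = pcompArgs α p H k (pcompArgs α n G i a) := by
  funext t
  simp only [pcompArgs]
  rcases lt_trichotomy t i with ht | rfl | ht
  · simp [ht, show t < k by omega, show t < k + n by omega, ← Function.iterate_add_apply,
      Nat.add_comm n p]
  · -- the two tuples fed to `G` differ beyond index `n`
    simp only [lt_irrefl, if_false, if_true, hik, iterate_map_of_map α G hG]
    refine hG_local _ _ fun s hs => ?_
    simp [show t + s < k + n by omega]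
  · simp only [show ¬ t < i by omega, ht.ne', if_false]
    rcases lt_trichotomy t k with htk | rfl | htk
    · simp [htk, show t + n < k + n by omega, ← Function.iterate_add_apply, Nat.add_comm n p]
    · simp only [lt_irrefl, if_false, if_true, iterate_map_of_map α H hH]
      congr 1
      funext r
      simp [show ¬ t + r < i by omega, show t + r ≠ i by omega, add_right_comm]
    · simp [show ¬ t < k by omega, htk.ne', show ¬ t + n < k + n by omega,
        show ¬ t + p < i by omega, show t + p ≠ i by omega, ← Function.iterate_add_apply,
        Nat.add_comm n p, add_right_comm]

end PcompArgs

theorem Finset.sum_range_add_split {M : Type*} [AddCommMonoid M] (T : ℕ → M) {i m : ℕ}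
    (hi : i < m) (n : ℕ) :
    ∑ k ∈ range (m + n), T k
      = ∑ k ∈ range i, T k + ∑ j ∈ range (n + 1), T (i + j) + ∑ k ∈ Ico (i + 1) m, T (k + n) := by
  rw [show m + n = i + (n + 1) + (m - (i + 1)) by omega, sum_range_add, sum_range_add,
    sum_Ico_eq_sum_range]
  congr 1
  refine sum_congr rfl fun r _ => congrArg T ?_
  omega

section Cochain

variable {K A : Type*} [Field K] [AddCommGroup A] [Module K A]

theorem toCochain_congr {m : ℕ} (f : MultilinearMap K (fun _ : Fin m => A) A) {x y : ℕ → A}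
    (hxy : ∀ s < m, x s = y s) : toCochain m f x = toCochain m f y :=
  congrArg f (funext fun t => hxy t t.isLt)

variable (α : A → A)

theorem toCochain_pcompArgs_sum {m n i : ℕ} (f : MultilinearMap K (fun _ : Fin m => A) A)
    (hi : i < m) {ι : Type*} (s : Finset ι) (c : ι → ℤ) (G : ι → (ℕ → A) → A) (a : ℕ → A) :
    toCochain m f (pcompArgs α n (fun x => ∑ j ∈ s, c j • G j x) i a)
      = ∑ j ∈ s, c j • toCochain m f (pcompArgs α n (G j) i a) := by
  have key : ∀ G' : (ℕ → A) → A, toCochain m f (pcompArgs α n G' i a)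
      = f.toLinearMap (fun t : Fin m => pcompArgs α n 0 i a t) ⟨i, hi⟩ (G' fun r => a (i + r)) := by
    intro G'
    simp only [toCochain, MultilinearMap.toLinearMap_apply]
    congr 1
    funext t
    rcases eq_or_ne t ⟨i, hi⟩ with rfl | ht
    · simp [pcompArgs]
    · simp [Function.update_of_ne ht, pcompArgs, Fin.ext_iff.not.mp ht]
  simp only [key, map_sum, map_zsmul]

end Cochain

section CircCirc

variable {K A : Type*} [Field K] [AddCommGroup A] [Module K A] (α : A → A)

theorem circ_circ_left_apply (m n p : ℕ) (F G H : (ℕ → A) → A) (a : ℕ → A) :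
    circ α (m + n) (p + 1) (circ α m (n + 1) F G) H a
      = ∑ i ∈ range m, ∑ k ∈ range (m + n),
          ((-1 : ℤ) ^ (p * k + n * i)) • F (pcompArgs α n G i (pcompArgs α p H k a)) := by
  simp only [circ_succ_apply, smul_sum, smul_smul, ← pow_add]
  exact sum_comm

theorem circ_circ_right_apply {m : ℕ} (n p : ℕ) (f : MultilinearMap K (fun _ : Fin m => A) A)
    (G H : (ℕ → A) → A) (a : ℕ → A) :
    circ α m (n + p + 1) (toCochain m f) (circ α (n + 1) (p + 1) G H) a
      = ∑ i ∈ range m, ∑ j ∈ range (n + 1), ((-1 : ℤ) ^ (p * (i + j) + n * i)) •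
          toCochain m f (pcompArgs α n G i (pcompArgs α p H (i + j) a)) := by
  have hGH : circ α (n + 1) (p + 1) G H
      = fun x => ∑ j ∈ range (n + 1), ((-1 : ℤ) ^ (p * j)) • G (pcompArgs α p H j x) :=
    funext (circ_succ_apply α _ _ G H)
  rw [circ_succ_apply]
  refine sum_congr rfl fun i hi => ?_
  rw [hGH, toCochain_pcompArgs_sum α f (mem_range.1 hi), smul_sum]
  refine sum_congr rfl fun j hj => ?_
  rw [smul_smul, ← pow_add, pcompArgs_pcompArgs_of_le α (Nat.lt_succ_iff.1 (mem_range.1 hj))]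
  congr 2
  ring

/-- The terms of `(F ∘ G) ∘ H` in which `H` is inserted to the left of `G`. -/
def circCircDisjoint (m n p : ℕ) (F G H : (ℕ → A) → A) (a : ℕ → A) : A :=
  ∑ i ∈ range m, ∑ k ∈ range i,
    ((-1 : ℤ) ^ (p * k + n * i)) • F (pcompArgs α n G i (pcompArgs α p H k a))

theorem sum_circCircDisjoint_swap (m n p : ℕ) (F : (ℕ → A) → A) {G H : (ℕ → A) → A}
    (hG : ∀ x, α (G x) = G fun t => α (x t)) (hH : ∀ x, α (H x) = H fun t => α (x t))
    (hG_local : ∀ x y : ℕ → A, (∀ s ≤ n, x s = y s) → G x = G y) (a : ℕ → A) :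
    ∑ i ∈ range m, ∑ k ∈ Ico (i + 1) m, ((-1 : ℤ) ^ (p * (k + n) + n * i)) •
        F (pcompArgs α n G i (pcompArgs α p H (k + n) a))
      = ((-1 : ℤ) ^ (n * p)) • circCircDisjoint α m p n F H G a := by
  rw [circCircDisjoint, smul_sum, sum_comm' (t' := range m) (s' := fun k => range k)
    fun i k => by simp only [mem_range, mem_Ico]; omega]
  refine sum_congr rfl fun k _ => ?_
  rw [smul_sum]
  refine sum_congr rfl fun i hi => ?_
  rw [pcompArgs_pcompArgs_of_lt α (mem_range.1 hi) hG hH hG_local, smul_smul, ← pow_add]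
  congr 2
  ring

theorem circ_circ_sub_circ_circ {m : ℕ} (n p : ℕ) (f : MultilinearMap K (fun _ : Fin m => A) A)
    {G H : (ℕ → A) → A}
    (hG : ∀ x, α (G x) = G fun t => α (x t)) (hH : ∀ x, α (H x) = H fun t => α (x t))
    (hG_local : ∀ x y : ℕ → A, (∀ s ≤ n, x s = y s) → G x = G y) (a : ℕ → A) :
    circ α m (n + p + 1) (toCochain m f) (circ α (n + 1) (p + 1) G H) a
        - circ α (m + n) (p + 1) (circ α m (n + 1) (toCochain m f) G) H a
      = -(circCircDisjoint α m n p (toCochain m f) G H a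
          + ((-1 : ℤ) ^ (n * p)) • circCircDisjoint α m p n (toCochain m f) H G a) := by
  rw [circ_circ_right_apply, circ_circ_left_apply,
    sum_congr rfl fun i hi => sum_range_add_split _ (mem_range.1 hi) n,
    ← sum_circCircDisjoint_swap α m n p _ hG hH hG_local, circCircDisjoint]
  simp only [sum_add_distrib]
  abel

end CircCirc

theorem circ_graded_pre_lie_general {K A : Type*} [Field K] [AddCommGroup A] [Module K A]
    (α : A →ₗ[K] A) (m n p : ℕ) (hn : 1 ≤ n) (hp : 1 ≤ p)
    (f : MultilinearMap K (fun _ : Fin m => A) A)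
    (g : MultilinearMap K (fun _ : Fin n => A) A)
    (h : MultilinearMap K (fun _ : Fin p => A) A)
    (hg : ∀ a : Fin n → A, α (g a) = g fun t => α (a t))
    (hh : ∀ a : Fin p → A, α (h a) = h fun t => α (a t)) :
    ∀ a : ℕ → A,
      circ (⇑α) m (n + p - 1) (toCochain m f) (circ (⇑α) n p (toCochain n g) (toCochain p h)) a
          - circ (⇑α) (m + n - 1) p (circ (⇑α) m n (toCochain m f) (toCochain n g)) (toCochain p h) a
        = ((-1 : ℤ) ^ ((n - 1) * (p - 1))) •
            (circ (⇑α) m (p + n - 1) (toCochain m f) (circ (⇑α) p n (toCochain p h) (toCochain n g)) a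
              - circ (⇑α) (m + p - 1) n (circ (⇑α) m p (toCochain m f) (toCochain p h)) (toCochain n g) a) := by
  intro a
  obtain ⟨n, rfl⟩ : ∃ k, n = k + 1 := ⟨n - 1, by omega⟩
  obtain ⟨p, rfl⟩ : ∃ k, p = k + 1 := ⟨p - 1, by omega⟩
  have hg_local : ∀ x y : ℕ → A, (∀ s ≤ n, x s = y s) →
      toCochain (n + 1) g x = toCochain (n + 1) g y :=
    fun x y hxy => toCochain_congr g fun s hs => hxy s (Nat.lt_succ_iff.1 hs)
  have hh_local : ∀ x y : ℕ → A, (∀ s ≤ p, x s = y s) →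
      toCochain (p + 1) h x = toCochain (p + 1) h y :=
    fun x y hxy => toCochain_congr h fun s hs => hxy s (Nat.lt_succ_iff.1 hs)
  rw [show n + 1 + (p + 1) - 1 = n + p + 1 by omega,
    show p + 1 + (n + 1) - 1 = p + n + 1 by omega, show m + (n + 1) - 1 = m + n by omega,
    show m + (p + 1) - 1 = m + p by omega,
    Nat.add_sub_cancel, Nat.add_sub_cancel]
  rw [circ_circ_sub_circ_circ α n p f (fun x => hg _) (fun x => hh _) hg_local,
    circ_circ_sub_circ_circ α p n f (fun x => hh _) (fun x => hg _) hh_local,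
    Nat.mul_comm p n, smul_neg, smul_add, smul_smul, ← pow_add,
    Even.neg_one_pow ⟨_, rfl⟩, one_smul]
  abel

/-- The `α`-twisted circle product on `C^•_α(A,A)` is graded right
pre-Lie: for `f ∈ C^m_α(A,A)`, `g ∈ C^n_α(A,A)`, `h ∈ C^p_α(A,A)`,
`f ∘ (g ∘ h) - (f ∘ g) ∘ h = (-1)^{(n-1)(p-1)} (f ∘ (h ∘ g) - (f ∘ h) ∘ g)`. -/
theorem circ_graded_pre_lie {K A : Type*} [Field K] [AddCommGroup A] [Module K A]
    (α : A →ₗ[K] A) (m n p : ℕ) (hm : 1 ≤ m) (hn : 1 ≤ n) (hp : 1 ≤ p)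
    (f : MultilinearMap K (fun _ : Fin m => A) A)
    (g : MultilinearMap K (fun _ : Fin n => A) A)
    (h : MultilinearMap K (fun _ : Fin p => A) A)
    (hf : ∀ a : Fin m → A, α (f a) = f fun t => α (a t))
    (hg : ∀ a : Fin n → A, α (g a) = g fun t => α (a t))
    (hh : ∀ a : Fin p → A, α (h a) = h fun t => α (a t)) :
    ∀ a : ℕ → A,
      circ (⇑α) m (n + p - 1) (toCochain m f) (circ (⇑α) n p (toCochain n g) (toCochain p h)) a
          - circ (⇑α) (m + n - 1) p (circ (⇑α) m n (toCochain m f) (toCochain n g)) (toCochain p h) a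
        = ((-1 : ℤ) ^ ((n - 1) * (p - 1))) •
            (circ (⇑α) m (p + n - 1) (toCochain m f) (circ (⇑α) p n (toCochain p h) (toCochain n g)) a
              - circ (⇑α) (m + p - 1) n (circ (⇑α) m p (toCochain m f) (toCochain p h)) (toCochain n g) a) :=
  circ_graded_pre_lie_general α m n p hn hp f g h hg hh
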